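/- In a median graph G, for every Θ-class E_i: both boundaries ∂H_i' and ∂H_i'' are convex, and the edges of E_i define an isomorphism between the subgraphs induced on ∂H_i' and ∂H_i'' (each vertex of ∂H_i' is matched by E_i to a unique vertex of ∂H_i'', and two vertices of ∂H_i' are adjacent if and only if their E_i-partners in ∂H_i'' are adjacent). -/

import Mathlib

namespace MedianPaper

variable {V : Type*}

/-- The metric interval `I(u,v)`: vertices on shortest `(u,v)`-paths. -/
def interval (G : SimpleGraph V) (u v : V) : Set V :=
  {w | G.dist u w + G.dist w v = G.dist u v}

/-- A median graph: a connected graph in which every triple of vertices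
has a unique median. -/
def MedianGraph (G : SimpleGraph V) : Prop :=
  G.Connected ∧ ∀ x y z : V, ∃! m : V,
    m ∈ interval G x y ∧ m ∈ interval G y z ∧ m ∈ interval G z x

/-- `u v x y` span a 4-cycle `u-v-y-x-u`, with opposite edge pairs
`(uv, xy)` and `(ux, vy)`. -/
def IsSquare (G : SimpleGraph V) (u v x y : V) : Prop :=
  G.Adj u v ∧ G.Adj x y ∧ G.Adj u x ∧ G.Adj v y ∧ u ≠ y ∧ v ≠ x

/-- Two edges are in relation Θ₀ if they are opposite edges of a common 4-cycle. -/
def Theta0 (G : SimpleGraph V) (e f : Sym2 V) : Prop :=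
  ∃ u v x y : V, IsSquare G u v x y ∧ e = s(u, v) ∧ f = s(x, y)

/-- Θ : the reflexive-transitive closure of Θ₀ on the edges of `G`. -/
def Theta (G : SimpleGraph V) (e f : Sym2 V) : Prop :=
  e ∈ G.edgeSet ∧ f ∈ G.edgeSet ∧ Relation.ReflTransGen (Theta0 G) e f

/-- The Θ-classes of `G`: equivalence classes of edges under Θ. -/
def ThetaClass (G : SimpleGraph V) (C : Set (Sym2 V)) : Prop :=
  ∃ e ∈ G.edgeSet, C = {f | Theta G e f}

/-- The edge set `C` separates `u` from `v` : they lie in different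
components of `G` minus `C`. -/
def Separates (G : SimpleGraph V) (C : Set (Sym2 V)) (u v : V) : Prop :=
  ¬ (G.deleteEdges C).Reachable u v

/-- The signature `σ_{u,v}`: Θ-classes separating `u` from `v`. -/
def signature (G : SimpleGraph V) (u v : V) : Set (Set (Sym2 V)) :=
  {C | ThetaClass G C ∧ Separates G C u v}

/-- `H`, `H'` are the two connected components (halfspaces) of `G` deprived
of the edges in `C`. -/
def IsHalfspacePair (G : SimpleGraph V) (C : Set (Sym2 V)) (H H' : Set V) : Prop :=
  H.Nonempty ∧ H'.Nonempty ∧ Disjoint H H' ∧ H ∪ H' = Set.univ ∧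
  (∀ x ∈ H, ∀ y ∈ H, (G.deleteEdges C).Reachable x y) ∧
  (∀ x ∈ H', ∀ y ∈ H', (G.deleteEdges C).Reachable x y) ∧
  (∀ x ∈ H, ∀ y ∈ H', ¬ (G.deleteEdges C).Reachable x y)

/-- The boundary of a halfspace `H` of the Θ-class `C` : vertices of `H`
incident to an edge of `C`. -/
def boundarySet (G : SimpleGraph V) (C : Set (Sym2 V)) (H : Set V) : Set V :=
  {x | x ∈ H ∧ ∃ y, G.Adj x y ∧ s(x, y) ∈ C}

/-- Orthogonality of Θ-classes: there is a common square using both. -/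
def Orthogonal (G : SimpleGraph V) (C₁ C₂ : Set (Sym2 V)) : Prop :=
  ∃ u v x y : V, IsSquare G u v x y ∧
    s(u, v) ∈ C₁ ∧ s(x, y) ∈ C₁ ∧ s(u, x) ∈ C₂ ∧ s(v, y) ∈ C₂

/-- A pairwise orthogonal family (POF) of Θ-classes. -/
def IsPOF (G : SimpleGraph V) (X : Set (Set (Sym2 V))) : Prop :=
  (∀ C ∈ X, ThetaClass G C) ∧
  ∀ C ∈ X, ∀ C' ∈ X, C ≠ C' → Orthogonal G C C'

/-- The `k`-dimensional hypercube graph, on subsets of `{1,…,k}`;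
two subsets are adjacent iff their symmetric difference has one element. -/
def cubeGraph (k : ℕ) : SimpleGraph (Finset (Fin k)) where
  Adj A B := (symmDiff A B).card = 1
  symm := by
    constructor
    intro A B h
    rwa [symmDiff_comm] at h
  loopless := by
    constructor
    intro A h
    simp [symmDiff_self] at h

/-- `S` induces a hypercube of dimension `k` in `G`. -/
def IsCubeDim (G : SimpleGraph V) (S : Set V) (k : ℕ) : Prop :=
  Nonempty ((G.induce S) ≃g cubeGraph k)

/-- `S` induces a hypercube in `G`. -/
def IsInducedCube (G : SimpleGraph V) (S : Set V) : Prop :=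
  ∃ k, IsCubeDim G S k

/-- The dimension of `G` is `d`: the largest dimension of an induced hypercube. -/
def GraphDim (G : SimpleGraph V) (d : ℕ) : Prop :=
  (∃ S : Set V, IsCubeDim G S d) ∧ ∀ (S : Set V) (k : ℕ), IsCubeDim G S k → k ≤ d

/-- The Θ-classes of the edges of the induced subgraph on `S`. -/
def cubeClasses (G : SimpleGraph V) (S : Set V) : Set (Set (Sym2 V)) :=
  {C | ThetaClass G C ∧ ∃ x ∈ S, ∃ y ∈ S, G.Adj x y ∧ s(x, y) ∈ C}

/-- With the `v₀`-orientation, `b ∈ S` is the basis of `S`: all edges of `S`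
incident to `b` are outgoing from `b`. -/
def IsBasis (G : SimpleGraph V) (v₀ : V) (S : Set V) (b : V) : Prop :=
  b ∈ S ∧ ∀ w ∈ S, G.Adj b w → G.dist v₀ b < G.dist v₀ w

/-- With the `v₀`-orientation, `b ∈ S` is the anti-basis of `S`: all edges of `S`
incident to `b` are ingoing to `b`. -/
def IsAntiBasis (G : SimpleGraph V) (v₀ : V) (S : Set V) (b : V) : Prop :=
  b ∈ S ∧ ∀ w ∈ S, G.Adj b w → G.dist v₀ w < G.dist v₀ b

/-- `ℰ⁻(v)` : the Θ-classes containing at least one edge ingoing to `v`. -/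
def inClasses (G : SimpleGraph V) (v₀ v : V) : Set (Set (Sym2 V)) :=
  {C | ThetaClass G C ∧ ∃ u, G.Adj u v ∧ G.dist v₀ u < G.dist v₀ v ∧ s(u, v) ∈ C}

/-- The ladder set `L_{u,v}`: classes of the signature `σ_{u,v}` having an
edge incident to `u`. -/
def ladder (G : SimpleGraph V) (u v : V) : Set (Set (Sym2 V)) :=
  {C | C ∈ signature G u v ∧ ∃ w, G.Adj u w ∧ s(u, w) ∈ C}

/-- A POF each of whose classes has an edge outgoing from `u`. -/
def OutgoingPOF (G : SimpleGraph V) (v₀ u : V) (L : Set (Set (Sym2 V))) : Prop :=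
  IsPOF G L ∧ ∀ C ∈ L, ∃ w, G.Adj u w ∧ G.dist v₀ u < G.dist v₀ w ∧ s(u, w) ∈ C

/-- A POF each of whose classes has an edge ingoing to `u`. -/
def IngoingPOF (G : SimpleGraph V) (v₀ u : V) (X : Set (Set (Sym2 V))) : Prop :=
  IsPOF G X ∧ ∀ C ∈ X, ∃ w, G.Adj w u ∧ G.dist v₀ w < G.dist v₀ u ∧ s(w, u) ∈ C

/-- `m` is a median of the triple `x, y, z`. -/
def IsMedian (G : SimpleGraph V) (x y z m : V) : Prop :=
  m ∈ interval G x y ∧ m ∈ interval G y z ∧ m ∈ interval G z x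

/-- `b` is the milestone following `a` on the way to `v`: `b` is the anti-basis of
the induced hypercube with basis `a` whose Θ-classes are the ladder set `L_{a,v}`. -/
def NextMilestone (G : SimpleGraph V) (v₀ v a b : V) : Prop :=
  ∃ S : Set V, IsInducedCube G S ∧ IsBasis G v₀ S a ∧ IsAntiBasis G v₀ S b ∧
    cubeClasses G S = ladder G a v

/-- The milestone set `Π(u,v)`: vertices obtained from `u` by iterating the
next-milestone step towards `v`. -/
def MilestoneSet (G : SimpleGraph V) (v₀ u v : V) : Set V :=
  {p | Relation.ReflTransGen (fun a b => NextMilestone G v₀ v a b) u p}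

/-- The penultimate milestone `π̄(u,v)`: the milestone of `Π(u,v)` other than `v`
closest to `v`, i.e. whose next milestone is `v` itself. -/
def IsPenultimate (G : SimpleGraph V) (v₀ u v p : V) : Prop :=
  p ∈ MilestoneSet G v₀ u v ∧ p ≠ v ∧ NextMilestone G v₀ v p v

/-- A convex set of vertices. -/
def ConvexSet (G : SimpleGraph V) (H : Set V) : Prop :=
  ∀ u ∈ H, ∀ v ∈ H, interval G u v ⊆ H

/-- A gated set of vertices: each vertex has a gate in `H`. -/
def GatedSet (G : SimpleGraph V) (H : Set V) : Prop :=
  ∀ x : V, ∃ g ∈ H, ∀ h ∈ H, g ∈ interval G x h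

/-!
Write `W(a, b) = halfspace G a b` for the vertices closer to `a` than to `b`. A median graph is
bipartite, so for an edge `ab` the sets `W(a, b)` and `W(b, a)` partition `V`. Uniqueness of medians
gives `W(u, v) = W(x, y)` for opposite edges `uv`, `xy` of a square, hence for all edges Θ-related
to `ab`, so none of them joins two vertices of `W(a, b)`. Conversely, an edge from `W(a, b)` to
`W(b, a)` is the far side of a square whose near side is such an edge closer to `a` (the fourth
vertex is a median), so by induction it is Θ-related to `ab`. Thus the Θ-class of `ab` is the cut
between `W(a, b)` and `W(b, a)`; these are its halfspaces, and they are convex because a geodesic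
leaving `W(a, b) = W(x, y)` through an edge `xy` would move away from its endpoint.

For the boundaries: two partners of one vertex `x` would put `x` on a geodesic inside `W(b, a)`;
the median of a vertex `z` between two boundary vertices and of their partners is a partner of `z`;
and partners `y`, `y'` of adjacent vertices `x`, `x'` are adjacent since `d(y, y') = d(y, x') - 1`.
-/

open SimpleGraph

variable {G : SimpleGraph V} {a b t u v w x x' y y' : V}

lemma mem_interval : w ∈ interval G u v ↔ G.dist u w + G.dist w v = G.dist u v := Iff.rfl

lemma exists_adj_dist_add_one_eq (h : G.dist v a ≠ 0) :
    ∃ s, G.Adj v s ∧ G.dist s a + 1 = G.dist v a := by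
  obtain ⟨p, hp⟩ := exists_walk_of_dist_ne_zero h
  cases p with
  | nil => exact absurd dist_self h
  | @cons _ s _ hvs q =>
    refine ⟨s, hvs, le_antisymm ?_ ?_⟩
    · have := dist_le q
      rw [Walk.length_cons] at hp
      omega
    · have := hvs.reachable.dist_triangle_left a
      rwa [dist_eq_one_iff_adj.mpr hvs, add_comm] at this

lemma mem_interval_of_mem_support (hc : G.Connected) {p : G.Walk u w}
    (hp : p.length = G.dist u w) (ht : t ∈ p.support) : t ∈ interval G u w := by
  obtain ⟨q, r, rfl⟩ := Walk.mem_support_iff_exists_append.mp ht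
  have := dist_le q
  have := dist_le r
  have : G.dist u w ≤ G.dist u t + G.dist t w := hc.dist_triangle
  rw [Walk.length_append] at hp
  rw [mem_interval]
  omega

lemma IsSquare.flip (hsq : IsSquare G u v x y) : IsSquare G x y u v :=
  let ⟨huv, hxy, hux, hvy, huy, hvx⟩ := hsq
  ⟨hxy, huv, hux.symm, hvy.symm, hvx.symm, huy.symm⟩

def halfspace (G : SimpleGraph V) (a b : V) : Set V := {v | G.dist v a < G.dist v b}

lemma mem_halfspace : v ∈ halfspace G a b ↔ G.dist v a < G.dist v b := Iff.rfl

lemma mem_halfspace_self (hab : G.Adj a b) : a ∈ halfspace G a b := by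
  simp [mem_halfspace, dist_eq_one_iff_adj.mpr hab]

namespace MedianGraph

lemma dist_ne_of_adj (hmed : MedianGraph G) (hxy : G.Adj x y) (v : V) :
    G.dist v x ≠ G.dist v y := by
  obtain ⟨m, hvx, hxy', hyv⟩ := (hmed.2 v x y).exists
  simp only [mem_interval, dist_eq_one_iff_adj.mpr hxy] at hvx hxy' hyv
  have hm : m = x ∨ m = y := by
    rcases Nat.eq_zero_or_pos (G.dist x m) with h | h
    · exact .inl (hmed.1.dist_eq_zero_iff.mp h).symm
    · exact .inr (hmed.1.dist_eq_zero_iff.mp (by omega))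
  rcases hm with rfl | rfl <;> grind [SimpleGraph.dist_comm]

lemma dist_eq_add_one_or_of_adj (hmed : MedianGraph G) (hxy : G.Adj x y) (v : V) :
    G.dist v y = G.dist v x + 1 ∨ G.dist v x = G.dist v y + 1 := by
  have := hmed.dist_ne_of_adj hxy v
  rcases hxy.diff_dist_adj (u := v) with h | h | h <;> omega

lemma dist_eq_two_of_adj_of_adj (hmed : MedianGraph G) (hxu : G.Adj x u) (hxv : G.Adj x v)
    (huv : u ≠ v) : G.dist u v = 2 := by
  have hnadj : ¬ G.Adj u v := fun h => hmed.dist_ne_of_adj h x (by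
    rw [dist_eq_one_iff_adj.mpr hxu, dist_eq_one_iff_adj.mpr hxv])
  have := hmed.1.dist_triangle (u := u) (v := x) (w := v)
  have := hmed.1.one_lt_dist_of_ne_of_not_adj huv hnadj
  have := dist_eq_one_iff_adj.mpr hxu
  have := dist_eq_one_iff_adj.mpr hxv
  grind [SimpleGraph.dist_comm]

lemma notMem_halfspace_iff (hmed : MedianGraph G) (hab : G.Adj a b) :
    v ∉ halfspace G a b ↔ v ∈ halfspace G b a := by
  have := hmed.dist_eq_add_one_or_of_adj hab v
  simp only [mem_halfspace]
  omega

lemma compl_halfspace (hmed : MedianGraph G) (hab : G.Adj a b) :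
    (halfspace G a b)ᶜ = halfspace G b a :=
  Set.ext fun _ => hmed.notMem_halfspace_iff hab

lemma dist_lt_of_isSquare (hmed : MedianGraph G) (hsq : IsSquare G u v x y)
    (h : G.dist t u < G.dist t v) : G.dist t x < G.dist t y := by
  obtain ⟨huv, hxy, hux, hvy, huy, hvx⟩ := hsq
  by_contra hyx
  have := hmed.dist_eq_add_one_or_of_adj huv t
  have := hmed.dist_eq_add_one_or_of_adj hxy t
  have := hmed.dist_eq_add_one_or_of_adj hux t
  have := hmed.dist_eq_add_one_or_of_adj hvy t
  have := hmed.dist_eq_two_of_adj_of_adj hux huv hvx.symm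
  have := dist_eq_one_iff_adj.mpr huv
  have := dist_eq_one_iff_adj.mpr hxy
  have := dist_eq_one_iff_adj.mpr hux
  have := dist_eq_one_iff_adj.mpr hvy
  -- `u` and `y` would both be medians of `t`, `x`, `v`
  refine huy ((hmed.2 t x v).unique ⟨?_, ?_, ?_⟩ ⟨?_, ?_, ?_⟩) <;>
    simp only [mem_interval] <;> grind [SimpleGraph.dist_comm]

lemma halfspace_eq_of_isSquare (hmed : MedianGraph G) (hsq : IsSquare G u v x y) :
    halfspace G u v = halfspace G x y :=
  Set.ext fun _ => ⟨hmed.dist_lt_of_isSquare hsq, hmed.dist_lt_of_isSquare hsq.flip⟩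

lemma interval_subset_halfspace (hmed : MedianGraph G) (hab : G.Adj a b)
    (hu : u ∈ halfspace G a b) : interval G u a ⊆ halfspace G a b := by
  intro t ht
  have := hmed.dist_eq_add_one_or_of_adj hab t
  have : G.dist u b ≤ G.dist u t + G.dist t b := hmed.1.dist_triangle
  simp only [mem_interval, mem_halfspace] at ht hu ⊢
  omega

lemma exists_isSquare_of_cross (hmed : MedianGraph G) (hab : G.Adj a b) (hvw : G.Adj v w)
    (hv : v ∈ halfspace G a b) (hw : w ∉ halfspace G a b) (hva : v ≠ a) :
    ∃ s m, IsSquare G s m v w ∧ s ∈ halfspace G a b ∧ m ∉ halfspace G a b ∧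
      G.dist s a + 1 = G.dist v a := by
  obtain ⟨s, hvs, hsa⟩ := exists_adj_dist_add_one_eq (mt hmed.1.dist_eq_zero_iff.mp hva)
  have hs : s ∈ halfspace G a b := by
    refine hmed.interval_subset_halfspace hab hv ?_
    rw [mem_interval, dist_eq_one_iff_adj.mpr hvs]
    omega
  have hsw : G.dist s w = 2 :=
    hmed.dist_eq_two_of_adj_of_adj hvs hvw (by rintro rfl; exact hw hs)
  -- the square is completed by the median of `s`, `w`, `b`
  obtain ⟨m, hswm, hwbm, hbsm⟩ := (hmed.2 s w b).exists
  simp only [mem_interval, mem_halfspace] at *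
  have := hmed.dist_eq_add_one_or_of_adj hab v
  have := hmed.dist_eq_add_one_or_of_adj hab s
  have := hmed.dist_eq_add_one_or_of_adj hab w
  have := hmed.dist_eq_add_one_or_of_adj hvw a
  have := hmed.dist_eq_add_one_or_of_adj hvw b
  have := hmed.dist_eq_add_one_or_of_adj hvs b
  have : G.dist w a ≤ G.dist w m + G.dist m a := hmed.1.dist_triangle
  have hsm : G.dist s m = 1 := by grind [SimpleGraph.dist_comm]
  have hmw : G.dist m w = 1 := by grind [SimpleGraph.dist_comm]
  have hm : ¬ G.dist m a < G.dist m b := by grind [SimpleGraph.dist_comm]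
  refine ⟨s, m, ⟨dist_eq_one_iff_adj.mp hsm, hvw, hvs.symm, dist_eq_one_iff_adj.mp hmw,
    ?_, ?_⟩, hs, hm, hsa⟩
  · rintro rfl; exact hw hs
  · rintro rfl; exact hm hv

lemma reflTransGen_theta0_of_cross (hmed : MedianGraph G) (hab : G.Adj a b) (hxy : G.Adj x y)
    (hx : x ∈ halfspace G a b) (hy : y ∉ halfspace G a b) :
    Relation.ReflTransGen (Theta0 G) s(a, b) s(x, y) := by
  obtain ⟨n, hn⟩ : ∃ n, G.dist x a = n := ⟨_, rfl⟩
  induction n generalizing x y with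
  | zero =>
    obtain rfl := hmed.1.dist_eq_zero_iff.mp hn
    have := hmed.dist_eq_add_one_or_of_adj hab y
    have := dist_eq_one_iff_adj.mpr hxy
    obtain rfl : y = b := hmed.1.dist_eq_zero_iff.mp (by
      simp only [mem_halfspace] at hy
      grind [SimpleGraph.dist_comm])
    exact .refl
  | succ n ih =>
    obtain ⟨s, m, hsq, hs, hm, hsx⟩ :=
      hmed.exists_isSquare_of_cross hab hxy hx hy (by rintro rfl; simp at hn)
    exact (ih hsq.1 hs hm (by omega)).tail ⟨s, m, x, y, hsq, rfl, rfl⟩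

lemma exists_halfspace_eq_of_reflTransGen_theta0 (hmed : MedianGraph G)
    {f : Sym2 V} (h : Relation.ReflTransGen (Theta0 G) s(a, b) f) :
    ∃ x y, f = s(x, y) ∧ halfspace G x y = halfspace G a b := by
  induction h with
  | refl => exact ⟨a, b, rfl, rfl⟩
  | tail _ hstep ih =>
    obtain ⟨x, y, rfl, hxy⟩ := ih
    obtain ⟨p, q, r, t, hsq, hpq, rfl⟩ := hstep
    have hW := hmed.halfspace_eq_of_isSquare hsq
    rcases Sym2.eq_iff.mp hpq with ⟨rfl, rfl⟩ | ⟨rfl, rfl⟩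
    · exact ⟨r, t, rfl, hW.symm.trans hxy⟩
    · refine ⟨t, r, Sym2.eq_swap, ?_⟩
      rw [← hmed.compl_halfspace hsq.2.1, ← hW, hmed.compl_halfspace hsq.1, hxy]

lemma halfspace_eq_of_theta (hmed : MedianGraph G) (hx : x ∈ halfspace G a b)
    (h : Theta G s(a, b) s(x, y)) :
    halfspace G x y = halfspace G a b := by
  obtain ⟨p, q, hpq, hW⟩ := hmed.exists_halfspace_eq_of_reflTransGen_theta0 h.2.2
  rcases Sym2.eq_iff.mp hpq with ⟨rfl, rfl⟩ | ⟨rfl, rfl⟩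
  · exact hW
  · rw [← hW] at hx
    simp [mem_halfspace] at hx

lemma theta_iff (hmed : MedianGraph G) (hab : G.Adj a b) (hx : x ∈ halfspace G a b) :
    Theta G s(a, b) s(x, y) ↔ G.Adj x y ∧ y ∉ halfspace G a b := by
  refine ⟨fun h => ⟨h.2.1, fun hy => ?_⟩, fun ⟨hxy, hy⟩ =>
    ⟨hab, hxy, hmed.reflTransGen_theta0_of_cross hab hxy hx hy⟩⟩
  rw [← hmed.halfspace_eq_of_theta hx h] at hy
  simp [mem_halfspace] at hy

lemma mem_thetaClass_iff (hmed : MedianGraph G) (hab : G.Adj a b) {C : Set (Sym2 V)}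
    (hC : C = {f | Theta G s(a, b) f}) (hx : x ∈ halfspace G a b) :
    s(x, y) ∈ C ↔ G.Adj x y ∧ y ∉ halfspace G a b := by
  subst hC
  exact hmed.theta_iff hab hx

lemma dist_eq_add_one_of_cross (hmed : MedianGraph G) (hab : G.Adj a b) (hxy : G.Adj x y)
    (hx : x ∈ halfspace G a b) (hy : y ∉ halfspace G a b) (ht : t ∈ halfspace G a b) :
    G.dist t y = G.dist t x + 1 := by
  rw [← hmed.halfspace_eq_of_theta hx ((hmed.theta_iff hab hx).mpr ⟨hxy, hy⟩),
    mem_halfspace] at ht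
  have := hmed.dist_eq_add_one_or_of_adj hxy t
  omega

lemma convex_halfspace (hmed : MedianGraph G) (hab : G.Adj a b) :
    ConvexSet G (halfspace G a b) := by
  intro u hu w hw z hz
  obtain ⟨n, hn⟩ : ∃ n, G.dist u z = n := ⟨_, rfl⟩
  induction n generalizing u with
  | zero => rwa [← hmed.1.dist_eq_zero_iff.mp hn]
  | succ n ih =>
    obtain ⟨u', huu', hu'z⟩ := exists_adj_dist_add_one_eq (by omega : G.dist u z ≠ 0)
    rw [mem_interval] at hz
    have : G.dist u' w ≤ G.dist u' z + G.dist z w := hmed.1.dist_triangle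
    have : G.dist u w ≤ G.dist u u' + G.dist u' w := hmed.1.dist_triangle
    rw [dist_eq_one_iff_adj.mpr huu'] at this
    have hu' : u' ∈ halfspace G a b := by
      by_contra hu'
      have := hmed.dist_eq_add_one_of_cross hab huu' hu hu' hw
      grind [SimpleGraph.dist_comm]
    exact ih u' hu' (by rw [mem_interval]; omega) (by omega)

lemma reachable_deleteEdges_of_mem_halfspace (hmed : MedianGraph G) (hab : G.Adj a b)
    {C : Set (Sym2 V)} (hC : C = {f | Theta G s(a, b) f})
    (hu : u ∈ halfspace G a b) (hw : w ∈ halfspace G a b) :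
    (G.deleteEdges C).Reachable u w := by
  obtain ⟨p, hp⟩ := hmed.1.exists_walk_length_eq_dist u w
  have hsupp : ∀ t ∈ p.support, t ∈ halfspace G a b := fun t ht =>
    hmed.convex_halfspace hab u hu w hw (mem_interval_of_mem_support hmed.1 hp ht)
  refine ⟨p.toDeleteEdges C fun e he heC => ?_⟩
  induction e using Sym2.ind with
  | _ x y =>
    have hx := hsupp x (p.fst_mem_support_of_mem_edges he)
    have hy := hsupp y (p.snd_mem_support_of_mem_edges he)
    exact ((hmed.mem_thetaClass_iff hab hC hx).mp heC).2 hy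

lemma not_reachable_deleteEdges_of_mem_halfspace_of_notMem (hmed : MedianGraph G)
    (hab : G.Adj a b) {C : Set (Sym2 V)} (hC : C = {f | Theta G s(a, b) f})
    (hu : u ∈ halfspace G a b) (hw : w ∉ halfspace G a b) :
    ¬ (G.deleteEdges C).Reachable u w := by
  rintro ⟨p⟩
  obtain ⟨d, -, hd, hd'⟩ := p.exists_boundary_dart _ hu hw
  obtain ⟨hadj, hdC⟩ := (deleteEdges_adj ..).mp d.adj
  exact hdC ((hmed.mem_thetaClass_iff hab hC hd).mpr ⟨hadj, hd'⟩)

lemma mem_boundarySet_halfspace_iff (hmed : MedianGraph G) (hab : G.Adj a b)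
    {C : Set (Sym2 V)} (hC : C = {f | Theta G s(a, b) f}) :
    x ∈ boundarySet G C (halfspace G a b) ↔
      x ∈ halfspace G a b ∧ ∃ y, G.Adj x y ∧ y ∉ halfspace G a b := by
  refine and_congr_right fun hx => exists_congr fun y => ?_
  rw [hmed.mem_thetaClass_iff hab hC hx]
  tauto

lemma convex_boundarySet_halfspace (hmed : MedianGraph G) (hab : G.Adj a b)
    {C : Set (Sym2 V)} (hC : C = {f | Theta G s(a, b) f}) :
    ConvexSet G (boundarySet G C (halfspace G a b)) := by
  intro u hu w hw z hz
  simp only [hmed.mem_boundarySet_halfspace_iff hab hC] at hu hw ⊢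
  obtain ⟨hu, u', huu', hu'⟩ := hu
  obtain ⟨hw, w', hww', hw'⟩ := hw
  have hzW := hmed.convex_halfspace hab u hu w hw hz
  have := hmed.dist_eq_add_one_of_cross hab huu' hu hu' hzW
  have := hmed.dist_eq_add_one_of_cross hab hww' hw hw' hzW
  have := hmed.dist_eq_add_one_of_cross hab hww' hw hw' hu
  rw [hmed.notMem_halfspace_iff hab] at hu' hw'
  have := hmed.dist_eq_add_one_of_cross hab.symm huu'.symm hu'
    ((hmed.notMem_halfspace_iff hab.symm).mpr hu) hw'
  -- the median of `z`, `u'`, `w'` is a neighbour of `z` across the cut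
  obtain ⟨m, hzu'm, hu'w'm, hw'zm⟩ := (hmed.2 z u' w').exists
  have hm := hmed.convex_halfspace hab.symm u' hu' w' hw' hu'w'm
  simp only [mem_interval] at hz hzu'm hu'w'm hw'zm
  refine ⟨hzW, m, dist_eq_one_iff_adj.mp ?_, (hmed.notMem_halfspace_iff hab).mpr hm⟩
  grind [SimpleGraph.dist_comm]

lemma existsUnique_partner (hmed : MedianGraph G) (hab : G.Adj a b)
    {C : Set (Sym2 V)} (hC : C = {f | Theta G s(a, b) f})
    (hx : x ∈ boundarySet G C (halfspace G a b)) :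
    ∃! y, y ∈ boundarySet G C (halfspace G b a) ∧ s(x, y) ∈ C := by
  have hC' : C = {f | Theta G s(b, a) f} := by rw [hC, Sym2.eq_swap]
  obtain ⟨hx, y, hxy, hy⟩ := (hmed.mem_boundarySet_halfspace_iff hab hC).mp hx
  have hx' : x ∉ halfspace G b a := (hmed.notMem_halfspace_iff hab.symm).mpr hx
  refine ⟨y, ⟨(hmed.mem_boundarySet_halfspace_iff hab.symm hC').mpr
    ⟨(hmed.notMem_halfspace_iff hab).mp hy, x, hxy.symm, hx'⟩,
    (hmed.mem_thetaClass_iff hab hC hx).mpr ⟨hxy, hy⟩⟩, ?_⟩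
  rintro y' ⟨-, hy'C⟩
  obtain ⟨hxy', hy'⟩ := (hmed.mem_thetaClass_iff hab hC hx).mp hy'C
  by_contra hne
  have := hmed.dist_eq_two_of_adj_of_adj hxy' hxy hne
  have := dist_eq_one_iff_adj.mpr hxy
  have := dist_eq_one_iff_adj.mpr hxy'
  refine hx' (hmed.convex_halfspace hab.symm y' ((hmed.notMem_halfspace_iff hab).mp hy')
    y ((hmed.notMem_halfspace_iff hab).mp hy) ?_)
  rw [mem_interval]
  grind [SimpleGraph.dist_comm]

lemma adj_of_adj_of_mem_thetaClass (hmed : MedianGraph G) (hab : G.Adj a b)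
    {C : Set (Sym2 V)} (hC : C = {f | Theta G s(a, b) f})
    (hx : x ∈ halfspace G a b) (hx' : x' ∈ halfspace G a b)
    (hxy : s(x, y) ∈ C) (hx'y' : s(x', y') ∈ C) (hxx' : G.Adj x x') : G.Adj y y' := by
  obtain ⟨hxy, hy⟩ := (hmed.mem_thetaClass_iff hab hC hx).mp hxy
  obtain ⟨hx'y', hy'⟩ := (hmed.mem_thetaClass_iff hab hC hx').mp hx'y'
  rw [hmed.notMem_halfspace_iff hab] at hy hy'
  have hne : y ≠ y' := by
    rintro rfl
    refine hmed.dist_ne_of_adj hxx' y ?_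
    rw [SimpleGraph.dist_comm, dist_eq_one_iff_adj.mpr hxy, SimpleGraph.dist_comm,
      dist_eq_one_iff_adj.mpr hx'y']
  have := hmed.dist_eq_add_one_of_cross hab.symm hx'y'.symm hy'
    ((hmed.notMem_halfspace_iff hab.symm).mpr hx') hy
  have : G.dist y x' ≤ G.dist y x + G.dist x x' := hmed.1.dist_triangle
  have := dist_eq_one_iff_adj.mpr hxy
  have := dist_eq_one_iff_adj.mpr hxx'
  have := hmed.1.pos_dist_of_ne hne
  rw [← dist_eq_one_iff_adj]
  grind [SimpleGraph.dist_comm]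

end MedianGraph

namespace IsHalfspacePair

variable {C : Set (Sym2 V)} {H H' : Set V}

lemma symm (hH : IsHalfspacePair G C H H') : IsHalfspacePair G C H' H :=
  let ⟨hne, hne', hdisj, hcover, hreach, hreach', hsep⟩ := hH
  ⟨hne', hne, hdisj.symm, Set.union_comm H H' ▸ hcover, hreach', hreach,
    fun x hx y hy hxy => hsep y hy x hx hxy.symm⟩

lemma eq_halfspace (hH : IsHalfspacePair G C H H') (hmed : MedianGraph G) (hab : G.Adj a b)
    (hC : C = {f | Theta G s(a, b) f}) (ha : a ∈ H) : H = halfspace G a b := by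
  obtain ⟨-, -, -, hcover, hreach, -, hsep⟩ := hH
  have ha' := mem_halfspace_self hab
  ext x
  refine ⟨fun hx => ?_, fun hx => ?_⟩
  · by_contra hx'
    exact hmed.not_reachable_deleteEdges_of_mem_halfspace_of_notMem hab hC ha' hx'
      (hreach a ha x hx)
  · refine (Set.eq_univ_iff_forall.mp hcover x).resolve_right fun hx' => hsep a ha x hx' ?_
    exact hmed.reachable_deleteEdges_of_mem_halfspace hab hC ha' hx

lemma compl_eq (hH : IsHalfspacePair G C H H') : Hᶜ = H' :=
  IsCompl.compl_eq ⟨hH.2.2.1, codisjoint_iff.mpr hH.2.2.2.1⟩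

lemma exists_adj_mem (hH : IsHalfspacePair G C H H') (hmed : MedianGraph G)
    (hC : ThetaClass G C) :
    ∃ a b, G.Adj a b ∧ C = {f | Theta G s(a, b) f} ∧ a ∈ H := by
  obtain ⟨e, he, rfl⟩ := hC
  induction e using Sym2.ind with
  | _ a b =>
    by_cases ha : a ∈ H
    · exact ⟨a, b, he, rfl, ha⟩
    rw [← Set.mem_compl_iff, hH.compl_eq] at ha
    refine ⟨b, a, he.symm, by rw [Sym2.eq_swap], ?_⟩
    rw [← hH.symm.compl_eq, hH.symm.eq_halfspace hmed he rfl ha, hmed.compl_halfspace he]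
    exact mem_halfspace_self he.symm

end IsHalfspacePair

theorem boundaries_convex_and_isomorphic_general {V : Type*}
    (G : SimpleGraph V) (hmed : MedianGraph G)
    (C : Set (Sym2 V)) (hC : ThetaClass G C)
    (H H' : Set V) (hH : IsHalfspacePair G C H H') :
    ConvexSet G (boundarySet G C H) ∧ ConvexSet G (boundarySet G C H') ∧
    (∀ x ∈ boundarySet G C H, ∃! y, y ∈ boundarySet G C H' ∧ s(x, y) ∈ C) ∧
    (∀ x x' y y' : V, x ∈ boundarySet G C H → x' ∈ boundarySet G C H →
      y ∈ boundarySet G C H' → y' ∈ boundarySet G C H' →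
      s(x, y) ∈ C → s(x', y') ∈ C → (G.Adj x x' ↔ G.Adj y y')) := by
  obtain ⟨a, b, hab, hCab, ha⟩ := hH.exists_adj_mem hmed hC
  have hCba : C = {f | Theta G s(b, a) f} := by rw [hCab, Sym2.eq_swap]
  obtain rfl := hH.eq_halfspace hmed hab hCab ha
  obtain rfl : H' = halfspace G b a := by rw [← hH.compl_eq, hmed.compl_halfspace hab]
  refine ⟨hmed.convex_boundarySet_halfspace hab hCab,
    hmed.convex_boundarySet_halfspace hab.symm hCba,
    fun x hx => hmed.existsUnique_partner hab hCab hx,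
    fun x x' y y' hx hx' hy hy' hxy hx'y' => ⟨?_, ?_⟩⟩
  · exact hmed.adj_of_adj_of_mem_thetaClass hab hCab hx.1 hx'.1 hxy hx'y'
  · rw [Sym2.eq_swap] at hxy hx'y'
    exact hmed.adj_of_adj_of_mem_thetaClass hab.symm hCba hy.1 hy'.1 hxy hx'y'

/-- In a median graph, for every Θ-class `C` with halfspaces
`H, H'`: both boundaries are convex, each boundary vertex is matched by `C` to a
unique vertex of the opposite boundary, and this matching is an isomorphism
between the subgraphs induced on the two boundaries. -/
theorem boundaries_convex_and_isomorphic {V : Type*} [Fintype V]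
    (G : SimpleGraph V) (hmed : MedianGraph G)
    (C : Set (Sym2 V)) (hC : ThetaClass G C)
    (H H' : Set V) (hH : IsHalfspacePair G C H H') :
    ConvexSet G (boundarySet G C H) ∧ ConvexSet G (boundarySet G C H') ∧
    (∀ x ∈ boundarySet G C H, ∃! y, y ∈ boundarySet G C H' ∧ s(x, y) ∈ C) ∧
    (∀ x x' y y' : V, x ∈ boundarySet G C H → x' ∈ boundarySet G C H →
      y ∈ boundarySet G C H' → y' ∈ boundarySet G C H' →
      s(x, y) ∈ C → s(x', y') ∈ C → (G.Adj x x' ↔ G.Adj y y')) :=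
  boundaries_convex_and_isomorphic_general G hmed C hC H H' hH

end MedianPaper
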